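/- arXiv:1509.08398 — 4 statements merged into one kernel-verified Lean document; each statement's English description precedes it below -/
import Mathlib

section
/- Let d ≥ 1 and let N be an integer with N ≥ d. Let ξ_1, …, ξ_N, ξ_{N+1} be i.i.d. random vectors in ℝ^d (defined on a common probability space), and assume that the unbiased empirical covariance matrix S_N of the first N samples is almost surely nonsingular. Then for every real λ > 0, the probability that (ξ_{N+1} − μ_N)ᵀ S_N^{-1} (ξ_{N+1} − μ_N) ≥ λ² is at most min{1, (1/(N+1))·⌊ d(N+1)(N² − 1 + Nλ²) / (N²λ²) ⌋}, where ⌊·⌋ is the floor function. -/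
/-!
Adjoin the test point to the sample and consider the leverages
`h_j = (x_j - x̄)ᵀ T⁻¹ (x_j - x̄)` of all `N + 1` points, where `x̄` and `T` are the mean and the
scatter matrix of the enlarged sample. They are nonnegative and sum to `tr (T⁻¹ T) = d`, so at
most `⌊d / t⌋` of them reach any level `t > 0`. By the Sherman–Morrison formula the leverage of the
last point is an increasing function of its Mahalanobis distance to the first `N` points, so the
event in question forces `h_{N+1} ≥ t` for `t = N²λ² / ((N + 1)(N² - 1 + Nλ²))`. The sample is
exchangeable, hence the `N + 1` events `h_j ≥ t` are equally likely and `(N + 1) P ≤ ⌊d / t⌋`.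
-/

open Matrix MeasureTheory ProbabilityTheory Finset

namespace Empirical

variable {ι m : Type*} [Fintype ι]

noncomputable def mean (x : ι → m → ℝ) : m → ℝ :=
  (Fintype.card ι : ℝ)⁻¹ • ∑ i, x i

noncomputable def scatter (x : ι → m → ℝ) : Matrix m m ℝ :=
  ∑ i, vecMulVec (x i - mean x) (x i - mean x)

noncomputable def cov (x : ι → m → ℝ) : Matrix m m ℝ :=
  ((Fintype.card ι : ℝ) - 1)⁻¹ • scatter x

noncomputable def mahalanobis [Fintype m] [DecidableEq m] (S : Matrix m m ℝ) (v : m → ℝ) : ℝ :=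
  v ⬝ᵥ (S⁻¹ *ᵥ v)

noncomputable def leverage [Fintype m] [DecidableEq m] (x : ι → m → ℝ) (i : ι) : ℝ :=
  mahalanobis (scatter x) (x i - mean x)

section Mahalanobis

variable [Fintype m]

theorem posSemidef_vecMulVec_self (v : m → ℝ) : (vecMulVec v v).PosSemidef := by
  simpa [star_trivial] using posSemidef_vecMulVec_self_star v

theorem posSemidef_scatter (x : ι → m → ℝ) : (scatter x).PosSemidef :=
  Finset.sum_induction _ PosSemidef (fun _ _ => PosSemidef.add) .zero fun _ _ =>
    posSemidef_vecMulVec_self _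

variable [DecidableEq m]

theorem mahalanobis_nonneg {S : Matrix m m ℝ} (hS : S.PosSemidef) (v : m → ℝ) :
    0 ≤ mahalanobis S v := by
  have h := hS.inv.dotProduct_mulVec_nonneg v
  rwa [star_trivial] at h

theorem mahalanobis_smul_right (S : Matrix m m ℝ) (c : ℝ) (v : m → ℝ) :
    mahalanobis S (c • v) = c ^ 2 * mahalanobis S v := by
  rw [mahalanobis, mahalanobis, mulVec_smul, smul_dotProduct, dotProduct_smul, smul_eq_mul,
    smul_eq_mul, ← mul_assoc, sq]

theorem mahalanobis_smul_left (S : Matrix m m ℝ) {c : ℝ} (hc : c ≠ 0) (v : m → ℝ) :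
    mahalanobis (c • S) v = c⁻¹ * mahalanobis S v := by
  by_cases hS : IsUnit S.det
  · have h := inv_smul' S (Units.mk0 c hc) hS
    rw [Units.smul_mk0, Units.smul_def, Units.val_inv_eq_inv_val, Units.val_mk0] at h
    rw [mahalanobis, mahalanobis, h, smul_mulVec, dotProduct_smul, smul_eq_mul]
  · have hcS : ¬IsUnit (c • S).det := by
      rwa [det_smul, IsUnit.mul_iff, not_and_or, or_iff_right (not_not.mpr (hc.isUnit.pow _))]
    simp [mahalanobis, nonsing_inv_apply_not_isUnit _ hS, nonsing_inv_apply_not_isUnit _ hcS]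

/-- The Sherman–Morrison formula, applied to `u` itself. -/
theorem PosDef.inv_add_smul_vecMulVec_mulVec {A : Matrix m m ℝ} (hA : A.PosDef) {β : ℝ}
    (hβ : 0 ≤ β) (u : m → ℝ) :
    (A + β • vecMulVec u u)⁻¹ *ᵥ u = (1 + β * mahalanobis A u)⁻¹ • (A⁻¹ *ᵥ u) := by
  have hq : 0 < 1 + β * mahalanobis A u := by
    have := mahalanobis_nonneg hA.posSemidef u
    positivity
  have := (hA.add_posSemidef ((posSemidef_vecMulVec_self u).smul hβ)).isUnit.invertible
  refine inv_mulVec_eq_vec ?_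
  rw [mulVec_smul, add_mulVec, smul_mulVec, vecMulVec_mulVec, mulVec_mulVec,
    mul_nonsing_inv _ ((isUnit_iff_isUnit_det _).mp hA.isUnit), one_mulVec, op_smul_eq_smul,
    smul_smul, ← mahalanobis]
  match_scalars
  field_simp

theorem mahalanobis_add_smul_vecMulVec {A : Matrix m m ℝ} (hA : A.PosDef) {β : ℝ}
    (hβ : 0 ≤ β) (u : m → ℝ) :
    mahalanobis (A + β • vecMulVec u u) u = mahalanobis A u / (1 + β * mahalanobis A u) := by
  rw [mahalanobis, PosDef.inv_add_smul_vecMulVec_mulVec hA hβ, dotProduct_smul, smul_eq_mul,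
    ← mahalanobis, inv_mul_eq_div]

end Mahalanobis

section Statistics

variable (x : ι → m → ℝ)

theorem card_smul_mean : (Fintype.card ι : ℝ) • mean x = ∑ i, x i := by
  rcases isEmpty_or_nonempty ι with hι | hι
  · simp
  · exact smul_inv_smul₀ (by positivity) _

theorem sum_sub_mean : ∑ i, (x i - mean x) = 0 := by
  rw [sum_sub_distrib, sum_const, card_univ, ← Nat.cast_smul_eq_nsmul ℝ, card_smul_mean, sub_self]

/-- Steiner's parallel-axis formula. -/
theorem sum_vecMulVec_sub (a : m → ℝ) :
    ∑ i, vecMulVec (x i - a) (x i - a) =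
      scatter x + (Fintype.card ι : ℝ) • vecMulVec (mean x - a) (mean x - a) := by
  have hsum k : ∑ i, (x i k - mean x k) = 0 := by
    simpa using congrFun (sum_sub_mean x) k
  have hx i : x i - a = (x i - mean x) + (mean x - a) := by abel
  ext k l
  simp only [hx, scatter, Matrix.add_apply, Matrix.smul_apply, Matrix.sum_apply, vecMulVec_apply,
    Pi.add_apply, add_mul, mul_add, sum_add_distrib, ← sum_mul, ← mul_sum, Pi.sub_apply, hsum,
    sum_const, card_univ, mul_zero, zero_mul, zero_add, add_zero, nsmul_eq_mul, smul_eq_mul]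
  ring

theorem cov_eq_zero_of_card_le_one (h : Fintype.card ι ≤ 1) : cov x = 0 := by
  interval_cases hc : Fintype.card ι
  · have := Fintype.card_eq_zero_iff.mp hc
    simp [cov, scatter]
  · simp [cov, hc]

theorem isUnit_scatter_of_isUnit_cov [Fintype m] [DecidableEq m] (h1 : Fintype.card ι ≠ 1)
    (h : IsUnit (cov x)) : IsUnit (scatter x) := by
  rw [cov, ← Units.smul_mk0 (inv_ne_zero (sub_ne_zero.mpr (by exact_mod_cast h1)))] at h
  exact (isUnit_smul_iff _ _).mp h

theorem mahalanobis_cov [Fintype m] [DecidableEq m] (h1 : Fintype.card ι ≠ 1) (v : m → ℝ) :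
    mahalanobis (cov x) v = ((Fintype.card ι : ℝ) - 1) * mahalanobis (scatter x) v := by
  rw [cov, mahalanobis_smul_left _ (inv_ne_zero (sub_ne_zero.mpr (by exact_mod_cast h1))), inv_inv]

theorem mean_comp_perm (σ : Equiv.Perm ι) : mean (x ∘ σ) = mean x := by
  simp only [mean, Function.comp_apply, Equiv.sum_comp]

theorem scatter_comp_perm (σ : Equiv.Perm ι) : scatter (x ∘ σ) = scatter x := by
  simp only [scatter, mean_comp_perm, Function.comp_apply]
  exact Equiv.sum_comp σ fun i => vecMulVec (x i - mean x) (x i - mean x)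

theorem leverage_comp_perm [Fintype m] [DecidableEq m] (σ : Equiv.Perm ι) (i : ι) :
    leverage (x ∘ σ) i = leverage x (σ i) := by
  simp only [leverage, mean_comp_perm, scatter_comp_perm, Function.comp_apply]

end Statistics

@[fun_prop]
theorem continuous_mean : Continuous (mean : (ι → m → ℝ) → m → ℝ) := by
  unfold mean
  fun_prop

@[fun_prop]
theorem continuous_scatter : Continuous (scatter : (ι → m → ℝ) → Matrix m m ℝ) := by
  unfold scatter
  fun_prop

section Leverage

variable [Fintype m] [DecidableEq m]

theorem leverage_nonneg (x : ι → m → ℝ) (i : ι) : 0 ≤ leverage x i :=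
  mahalanobis_nonneg (posSemidef_scatter x) _

theorem sum_leverage {x : ι → m → ℝ} (h : IsUnit (scatter x)) :
    ∑ i, leverage x i = Fintype.card m := by
  have htrace i : leverage x i =
      trace ((scatter x)⁻¹ * vecMulVec (x i - mean x) (x i - mean x)) := by
    rw [mul_vecMulVec, trace_vecMulVec, leverage, mahalanobis, dotProduct_comm]
  simp_rw [htrace, ← trace_sum, ← mul_sum]
  rw [← scatter, nonsing_inv_mul _ ((isUnit_iff_isUnit_det _).mp h), trace_one]

theorem card_filter_le_leverage_le_floor {x : ι → m → ℝ} (h : IsUnit (scatter x)) {t : ℝ}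
    (ht : 0 < t) : #{i | t ≤ leverage x i} ≤ ⌊Fintype.card m / t⌋₊ := by
  refine Nat.le_floor ((le_div_iff₀ ht).mpr ?_)
  calc (#{i | t ≤ leverage x i} : ℝ) * t = #{i | t ≤ leverage x i} • t :=
        (nsmul_eq_mul _ _).symm
    _ ≤ ∑ i ∈ {i | t ≤ leverage x i}, leverage x i :=
      card_nsmul_le_sum _ _ _ fun i hi => (mem_filter.mp hi).2
    _ ≤ ∑ i, leverage x i :=
      sum_le_sum_of_subset_of_nonneg (filter_subset _ _) fun i _ _ => leverage_nonneg x i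
    _ = Fintype.card m := sum_leverage h

theorem leverage_eq_inv_det_mul (x : ι → m → ℝ) (i : ι) :
    leverage x i = (scatter x).det⁻¹ *
      ((x i - mean x) ⬝ᵥ ((scatter x).adjugate *ᵥ (x i - mean x))) := by
  rw [leverage, mahalanobis, Matrix.inv_def, Ring.inverse_eq_inv', smul_mulVec, dotProduct_smul,
    smul_eq_mul]

theorem measurable_leverage (i : ι) : Measurable fun x : ι → m → ℝ => leverage x i := by
  simp_rw [leverage_eq_inv_det_mul]
  exact continuous_scatter.matrix_det.measurable.inv.mul (by fun_prop : Continuous _).measurable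

end Leverage

section Snoc

variable {n : ℕ} (x : Fin (n + 1) → m → ℝ)

theorem mean_eq_mean_init_add :
    mean x = mean (Fin.init x) + ((n : ℝ) + 1)⁻¹ • (x (Fin.last n) - mean (Fin.init x)) := by
  have h : ((n : ℝ) + 1) • mean x = (n : ℝ) • mean (Fin.init x) + x (Fin.last n) := by
    have hinit := card_smul_mean (Fin.init x)
    rw [Fintype.card_fin] at hinit
    rw [hinit, Fin.init_def, ← Fin.sum_univ_castSucc]
    simpa using card_smul_mean x
  rw [← inv_smul_smul₀ (by positivity : (n : ℝ) + 1 ≠ 0) (mean x), h]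
  match_scalars <;> field_simp
  ring

theorem last_sub_mean :
    x (Fin.last n) - mean x = ((n : ℝ) / (n + 1)) • (x (Fin.last n) - mean (Fin.init x)) := by
  rw [mean_eq_mean_init_add]
  match_scalars <;> field_simp <;> ring

theorem scatter_eq_scatter_init_add :
    scatter x = scatter (Fin.init x) + ((n : ℝ) / (n + 1)) •
      vecMulVec (x (Fin.last n) - mean (Fin.init x)) (x (Fin.last n) - mean (Fin.init x)) := by
  set u := x (Fin.last n) - mean (Fin.init x)
  have hn : (n : ℝ) + 1 ≠ 0 := by positivity
  have hinit : mean (Fin.init x) - mean x = -((n : ℝ) + 1)⁻¹ • u := by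
    rw [mean_eq_mean_init_add]; module
  rw [scatter, Fin.sum_univ_castSucc, show ∑ i : Fin n, vecMulVec (x i.castSucc - mean x)
    (x i.castSucc - mean x) = _ from sum_vecMulVec_sub (Fin.init x) (mean x), hinit,
    last_sub_mean, Fintype.card_fin]
  simp only [smul_vecMulVec, vecMulVec_smul]
  match_scalars <;> field_simp
  ring

variable [Fintype m] [DecidableEq m]

theorem isUnit_scatter_of_isUnit_scatter_init (h : IsUnit (scatter (Fin.init x))) :
    IsUnit (scatter x) := by
  rw [scatter_eq_scatter_init_add]
  exact PosDef.isUnit (((posSemidef_scatter _).posDef_iff_isUnit.mpr h).add_posSemidef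
    ((posSemidef_vecMulVec_self _).smul (by positivity)))

theorem leverage_last_eq (h : IsUnit (scatter (Fin.init x))) :
    leverage x (Fin.last n) =
      ((n : ℝ) / (n + 1)) ^ 2 *
        mahalanobis (scatter (Fin.init x)) (x (Fin.last n) - mean (Fin.init x)) /
      (1 + (n : ℝ) / (n + 1) *
        mahalanobis (scatter (Fin.init x)) (x (Fin.last n) - mean (Fin.init x))) := by
  have hA := (posSemidef_scatter (Fin.init x)).posDef_iff_isUnit.mpr h
  rw [leverage, scatter_eq_scatter_init_add, last_sub_mean, mahalanobis_smul_right,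
    mahalanobis_add_smul_vecMulVec hA (by positivity), mul_div_assoc]

theorem isUnit_scatter_of_isUnit_cov_init (hn : 2 ≤ n) (h : IsUnit (cov (Fin.init x))) :
    IsUnit (scatter x) :=
  isUnit_scatter_of_isUnit_scatter_init x
    (isUnit_scatter_of_isUnit_cov _ (by rw [Fintype.card_fin]; omega) h)

theorem le_leverage_last (hn : 2 ≤ n) (h : IsUnit (cov (Fin.init x))) {s : ℝ} (hs : 0 ≤ s)
    (hsQ : s ≤ mahalanobis (cov (Fin.init x)) (x (Fin.last n) - mean (Fin.init x))) :
    (n : ℝ) ^ 2 * s / ((n + 1) * (n ^ 2 - 1 + n * s)) ≤ leverage x (Fin.last n) := by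
  have h1 : Fintype.card (Fin n) ≠ 1 := by rw [Fintype.card_fin]; omega
  rw [mahalanobis_cov _ h1, Fintype.card_fin] at hsQ
  rw [leverage_last_eq x (isUnit_scatter_of_isUnit_cov _ h1 h)]
  have hq := mahalanobis_nonneg (posSemidef_scatter (Fin.init x))
    (x (Fin.last n) - mean (Fin.init x))
  have hn' : (2 : ℝ) ≤ n := by exact_mod_cast hn
  -- with `q` as in `hq` and `Q = (n - 1) q`, the leverage is `n²Q / ((n + 1)(n² - 1 + nQ))`,
  -- which is increasing in `Q`
  rw [div_le_div_iff₀ (by nlinarith) (by positivity)]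
  field_simp
  nlinarith

end Snoc

end Empirical

section Exchangeability

variable {Ω ι E : Type*} [MeasurableSpace Ω] [Fintype ι] [MeasurableSpace E] {μ : Measure Ω}

theorem sum_measure_le_of_ae_card_le {s : ι → Set Ω} [∀ i, DecidablePred (· ∈ s i)]
    (hs : ∀ i, NullMeasurableSet (s i) μ) {K : ℕ} (hK : ∀ᵐ ω ∂μ, #{i | ω ∈ s i} ≤ K) :
    ∑ i, μ (s i) ≤ K * μ Set.univ := by
  calc ∑ i, μ (s i) = ∑ i, ∫⁻ ω, (s i).indicator 1 ω ∂μ := by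
        simp_rw [lintegral_indicator_one₀ (hs _)]
    _ = ∫⁻ ω, (#{i | ω ∈ s i} : ENNReal) ∂μ := by
        rw [← lintegral_finsetSum' _ fun i _ => ?_]
        · simp only [Set.indicator_apply, Pi.one_apply, sum_boole]
        · exact aemeasurable_one.indicator₀ (hs i)
    _ ≤ ∫⁻ _, (K : ENNReal) ∂μ := lintegral_mono_ae (hK.mono fun ω hω => by exact_mod_cast hω)
    _ = K * μ Set.univ := lintegral_const _

theorem map_comp_perm_eq_map_of_iid {ξ : ι → Ω → E} (hindep : iIndepFun ξ μ)
    (hident : ∀ i j, IdentDistrib (ξ i) (ξ j) μ μ) (σ : Equiv.Perm ι) :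
    μ.map (fun ω i => ξ (σ i) ω) = μ.map (fun ω i => ξ i ω) := by
  rw [(hindep.precomp σ.injective).map_fun_eq_pi_map fun i => (hident _ i).aemeasurable_fst,
    hindep.map_fun_eq_pi_map fun i => (hident i i).aemeasurable_fst]
  exact congrArg Measure.pi (funext fun i => (hident (σ i) i).map_eq)

theorem card_mul_measure_le_of_iid {ξ : ι → Ω → E} (hindep : iIndepFun ξ μ)
    (hident : ∀ i j, IdentDistrib (ξ i) (ξ j) μ μ) {f : (ι → E) → ι → ℝ}
    (hf : ∀ i, Measurable fun x => f x i)
    (hperm : ∀ (σ : Equiv.Perm ι) x i, f (x ∘ σ) i = f x (σ i))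
    {t : ℝ} {K : ℕ} (hK : ∀ᵐ ω ∂μ, #{i | t ≤ f (fun j => ξ j ω) i} ≤ K) (i : ι) :
    Fintype.card ι * μ {ω | t ≤ f (fun j => ξ j ω) i} ≤ K := by
  classical
  have := hindep.isProbabilityMeasure
  have hX : AEMeasurable (fun ω j => ξ j ω) μ :=
    aemeasurable_pi_lambda _ fun j => (hident j j).aemeasurable_fst
  have hB j : MeasurableSet {x | t ≤ f x j} := measurableSet_le measurable_const (hf j)
  have hexch j : μ {ω | t ≤ f (fun k => ξ k ω) j} = μ {ω | t ≤ f (fun k => ξ k ω) i} := by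
    have hswap : {ω | t ≤ f (fun k => ξ k ω) j} =
        (fun ω k => ξ (Equiv.swap i j k) ω) ⁻¹' {x | t ≤ f x i} := by
      ext ω
      have h := hperm (Equiv.swap i j) (fun k => ξ k ω) i
      rw [Equiv.swap_apply_left] at h
      simp only [Set.mem_preimage, Set.mem_ofPred_eq, ← h]
      rfl
    rw [hswap, ← Measure.map_apply_of_aemeasurable
      (aemeasurable_pi_lambda _ fun k => (hident _ k).aemeasurable_fst) (hB i),
      map_comp_perm_eq_map_of_iid hindep hident, Measure.map_apply_of_aemeasurable hX (hB i)]
    rfl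
  calc (Fintype.card ι : ENNReal) * μ {ω | t ≤ f (fun j => ξ j ω) i}
      = ∑ j, μ {ω | t ≤ f (fun k => ξ k ω) j} := by simp [hexch]
    _ ≤ K * μ Set.univ :=
      sum_measure_le_of_ae_card_le (fun j => hX.nullMeasurableSet_preimage (hB j)) hK
    _ = K := by simp

end Exchangeability

theorem ENNReal.le_ofReal_min_of_mul_le_floor {p : ENNReal} {n : ℕ} {r : ℝ} (hr : 0 ≤ r)
    (hp : p ≤ 1) (h : (n + 1 : ENNReal) * p ≤ ⌊r⌋₊) :
    p ≤ ENNReal.ofReal (min 1 (((n : ℝ) + 1)⁻¹ * (⌊r⌋ : ℤ))) := by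
  have hn : (0 : ℝ) < n + 1 := by positivity
  rw [← natCast_floor_eq_intCast_floor hr, ENNReal.ofReal_min, ENNReal.ofReal_one, inv_mul_eq_div,
    ENNReal.ofReal_div_of_pos hn, ENNReal.ofReal_natCast,
    ENNReal.ofReal_add n.cast_nonneg zero_le_one, ENNReal.ofReal_natCast, ENNReal.ofReal_one]
  refine le_min hp ((ENNReal.le_div_iff_mul_le (by simp) (by simp)).mpr ?_)
  rwa [mul_comm]

open Empirical in
theorem empirical_multivariate_chebyshev_general {Ω : Type*} [MeasureSpace Ω]
    [IsProbabilityMeasure (ℙ : Measure Ω)]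
    (d N : ℕ)
    (ξ : Fin (N + 1) → Ω → (Fin d → ℝ))
    (hindep : iIndepFun ξ ℙ)
    (hident : ∀ i j, IdentDistrib (ξ i) (ξ j) ℙ ℙ)
    (μN : Ω → (Fin d → ℝ))
    (hμN : ∀ ω, μN ω = (N : ℝ)⁻¹ • ∑ i : Fin N, ξ i.castSucc ω)
    (SN : Ω → Matrix (Fin d) (Fin d) ℝ)
    (hSN : ∀ ω, SN ω = ((N : ℝ) - 1)⁻¹ •
      ∑ i : Fin N, vecMulVec (ξ i.castSucc ω - μN ω) (ξ i.castSucc ω - μN ω))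
    (hns : ∀ᵐ ω ∂(ℙ : Measure Ω), IsUnit (SN ω))
    (lam : ℝ) (hlam : 0 < lam) :
    ℙ {ω | lam ^ 2 ≤
        (ξ (Fin.last N) ω - μN ω) ⬝ᵥ ((SN ω)⁻¹ *ᵥ (ξ (Fin.last N) ω - μN ω))}
      ≤ ENNReal.ofReal (min 1
          (((N : ℝ) + 1)⁻¹ *
            (⌊((d : ℝ) * ((N : ℝ) + 1) * ((N : ℝ) ^ 2 - 1 + (N : ℝ) * lam ^ 2))
                / ((N : ℝ) ^ 2 * lam ^ 2)⌋ : ℤ))) := by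
  set X : Ω → Fin (N + 1) → Fin d → ℝ := fun ω i => ξ i ω
  have hμ ω : μN ω = mean (Fin.init (X ω)) := by simp [hμN, mean, Fin.init, X]
  have hS ω : SN ω = cov (Fin.init (X ω)) := by simp [hSN, hμ, cov, scatter, Fin.init, X]
  obtain hN | hN := lt_or_ge N 2
  · -- `SN = 0`, so its a.s. invertibility forces `d = 0`, where the quadratic form vanishes.
    obtain ⟨ω, hω⟩ := hns.exists
    rw [hS, cov_eq_zero_of_card_le_one _ (by rw [Fintype.card_fin]; omega), isUnit_zero_iff] at hω
    have := subsingleton_of_zero_eq_one hω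
    simp [Subsingleton.elim (SN _)⁻¹ 0, not_le.mpr (pow_pos hlam 2)]
  have hN' : (2 : ℝ) ≤ N := by exact_mod_cast hN
  set t := (N : ℝ) ^ 2 * lam ^ 2 / ((N + 1) * (N ^ 2 - 1 + N * lam ^ 2))
  have ht : 0 < t := div_pos (by positivity) (mul_pos (by positivity) (by nlinarith))
  have hcount : ∀ᵐ ω ∂ℙ, #{i | t ≤ leverage (X ω) i} ≤ ⌊d / t⌋₊ := by
    filter_upwards [hns] with ω hω
    rw [hS] at hω
    simpa using card_filter_le_leverage_le_floor (isUnit_scatter_of_isUnit_cov_init _ hN hω) ht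
  have hlast := card_mul_measure_le_of_iid hindep hident measurable_leverage
    (fun σ x i => leverage_comp_perm x σ i) hcount (Fin.last N)
  have hdt : (d : ℝ) / t = (d : ℝ) * ((N : ℝ) + 1) * ((N : ℝ) ^ 2 - 1 + (N : ℝ) * lam ^ 2) /
      ((N : ℝ) ^ 2 * lam ^ 2) := by
    rw [div_div_eq_mul_div, mul_assoc]
  calc _ ≤ ℙ {ω | t ≤ leverage (X ω) (Fin.last N)} := by
        refine measure_mono_ae (hns.mono fun ω hω hQ => ?_)
        simp only [hS, hμ] at hQ
        exact le_leverage_last _ hN (hS ω ▸ hω) (by positivity) hQ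
    _ ≤ _ := ENNReal.le_ofReal_min_of_mul_le_floor (hdt ▸ by positivity) prob_le_one
        (by simpa [hdt] using hlast)

/-- **Theorem 1.** Empirical multivariate Chebyshev inequality: given `N+1`
i.i.d. random vectors in `ℝ^d` (with `N ≥ d ≥ 1`) whose unbiased empirical covariance `S_N` of
the first `N` samples is a.s. nonsingular, for every `λ > 0` the probability that
`(ξ_{N+1} − μ_N)ᵀ S_N⁻¹ (ξ_{N+1} − μ_N) ≥ λ²` is at most
`min{1, (1/(N+1))·⌊d(N+1)(N²−1+Nλ²)/(N²λ²)⌋}`. -/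
theorem empirical_multivariate_chebyshev {Ω : Type*} [MeasureSpace Ω]
    [IsProbabilityMeasure (ℙ : Measure Ω)]
    (d N : ℕ) (hd : 1 ≤ d) (hN : d ≤ N)
    (ξ : Fin (N + 1) → Ω → (Fin d → ℝ))
    (hmeas : ∀ i, Measurable (ξ i))
    (hindep : iIndepFun ξ ℙ)
    (hident : ∀ i j, IdentDistrib (ξ i) (ξ j) ℙ ℙ)
    (μN : Ω → (Fin d → ℝ))
    (hμN : ∀ ω, μN ω = (N : ℝ)⁻¹ • ∑ i : Fin N, ξ i.castSucc ω)
    (SN : Ω → Matrix (Fin d) (Fin d) ℝ)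
    (hSN : ∀ ω, SN ω = ((N : ℝ) - 1)⁻¹ •
      ∑ i : Fin N, vecMulVec (ξ i.castSucc ω - μN ω) (ξ i.castSucc ω - μN ω))
    (hns : ∀ᵐ ω ∂(ℙ : Measure Ω), IsUnit (SN ω))
    (lam : ℝ) (hlam : 0 < lam) :
    ℙ {ω | lam ^ 2 ≤
        (ξ (Fin.last N) ω - μN ω) ⬝ᵥ ((SN ω)⁻¹ *ᵥ (ξ (Fin.last N) ω - μN ω))}
      ≤ ENNReal.ofReal (min 1
          (((N : ℝ) + 1)⁻¹ *
            (⌊((d : ℝ) * ((N : ℝ) + 1) * ((N : ℝ) ^ 2 - 1 + (N : ℝ) * lam ^ 2))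
                / ((N : ℝ) ^ 2 * lam ^ 2)⌋ : ℤ))) :=
  empirical_multivariate_chebyshev_general d N ξ hindep hident μN hμN SN hSN hns lam hlam
end

section
/- Let d ≥ 1 and let N be an integer with N ≥ d. Let ξ_1, …, ξ_N, ξ_{N+1} be i.i.d. random vectors in ℝ^d, and assume the unbiased empirical covariance matrix S_N of the first N samples is almost surely nonsingular. Then for every real λ > 0, the probability that (ξ_{N+1} − μ_N)ᵀ S_N^{-1} (ξ_{N+1} − μ_N) ≥ λ² is at most min{1, d(N² − 1 + Nλ²)/(N²λ²)}. -/
/-!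
By exchangeability of the i.i.d. sample, the probability that the last point is an outlier
(`λ² ≤` its Mahalanobis distance to the other `N` points) is the expected fraction of indices `j`
for which `x_j` is an outlier of the remaining `N` points. That fraction is bounded for every
sample. Let `T` be the scatter matrix of all `N + 1` points about their mean `m`. Deleting `x_j`
changes `T` by a rank-one term, so by Sherman–Morrison the leverage
`h_j = (x_j - m)ᵀ T⁻¹ (x_j - m)` is an increasing function of the leave-`j`-out Mahalanobis
distance. Since `∑ⱼ h_j = tr (T⁻¹ T) = d`, at most `d / h(λ²)` indices are outliers, which is
`N + 1` times the claimed bound.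
-/

open Matrix MeasureTheory ProbabilityTheory Finset
open scoped ENNReal

namespace Matrix

variable {K : Type*} [Field K] {n : Type*} [Fintype n] [DecidableEq n]

theorem dotProduct_inv_add_smul_vecMulVec_mulVec {A : Matrix n n K} {v : n → K} {c : K}
    (hA : IsUnit A.det) (hT : IsUnit (A + c • vecMulVec v v).det)
    (hv : 1 + c * (v ⬝ᵥ (A⁻¹ *ᵥ v)) ≠ 0) :
    v ⬝ᵥ ((A + c • vecMulVec v v)⁻¹ *ᵥ v)
      = (v ⬝ᵥ (A⁻¹ *ᵥ v)) / (1 + c * (v ⬝ᵥ (A⁻¹ *ᵥ v))) := by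
  set s := v ⬝ᵥ (A⁻¹ *ᵥ v)
  set T := A + c • vecMulVec v v
  have hTA : T *ᵥ (A⁻¹ *ᵥ v) = (1 + c * s) • v := by
    rw [add_mulVec, mulVec_mulVec, mul_nonsing_inv _ hA, one_mulVec, smul_mulVec,
      vecMulVec_mulVec, op_smul_eq_smul, add_smul, one_smul, mul_smul]
  have hTinv : T⁻¹ *ᵥ v = (1 + c * s)⁻¹ • (A⁻¹ *ᵥ v) := by
    conv_lhs => rw [← inv_smul_smul₀ hv v, ← hTA]
    rw [mulVec_smul, mulVec_mulVec, nonsing_inv_mul _ hT, one_mulVec]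
  rw [hTinv, dotProduct_smul, smul_eq_mul, div_eq_inv_mul]

theorem sum_dotProduct_inv_mulVec_eq_card {ι : Type*} [Fintype ι] (v : ι → n → K)
    (hT : IsUnit (∑ i, vecMulVec (v i) (v i)).det) :
    ∑ i, v i ⬝ᵥ ((∑ k, vecMulVec (v k) (v k))⁻¹ *ᵥ v i) = Fintype.card n := by
  set T := ∑ k, vecMulVec (v k) (v k)
  calc ∑ i, v i ⬝ᵥ (T⁻¹ *ᵥ v i) = trace (T⁻¹ * T) := by
        simp_rw [T, mul_sum, trace_sum, mul_vecMulVec, trace_vecMulVec, dotProduct_comm]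
    _ = Fintype.card n := by rw [nonsing_inv_mul _ hT, trace_one]

theorem inv_smul₀ (k : K) (A : Matrix n n K) : (k • A)⁻¹ = k⁻¹ • A⁻¹ := by
  rcases eq_or_ne k 0 with rfl | hk
  · simp
  by_cases hA : IsUnit A.det
  · exact inv_smul' A (Units.mk0 k hk) hA
  · have hkA : ¬IsUnit (k • A).det := by simpa [det_smul, hk] using hA
    rw [nonsing_inv_apply_not_isUnit _ hA, nonsing_inv_apply_not_isUnit _ hkA, smul_zero]

end Matrix

section SampleStatistics

variable {n : Type*} {N : ℕ} {σ : Equiv.Perm (Fin (N + 1))} {j : Fin (N + 1)}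

noncomputable def sampleMean (x : Fin N → n → ℝ) : n → ℝ := (N : ℝ)⁻¹ • ∑ i, x i

noncomputable def scatter (x : Fin N → n → ℝ) : Matrix n n ℝ :=
  ∑ i, vecMulVec (x i - sampleMean x) (x i - sampleMean x)

noncomputable def sampleCov (x : Fin N → n → ℝ) : Matrix n n ℝ := ((N : ℝ) - 1)⁻¹ • scatter x

noncomputable def mahalanobisSqLast [Fintype n] [DecidableEq n] (x : Fin (N + 1) → n → ℝ) : ℝ :=
  (x (Fin.last N) - sampleMean (Fin.init x)) ⬝ᵥ
    ((sampleCov (Fin.init x))⁻¹ *ᵥ (x (Fin.last N) - sampleMean (Fin.init x)))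

theorem scatter_apply (x : Fin N → n → ℝ) (a b : n) :
    scatter x a b = ∑ i, x i a * x i b - (N : ℝ)⁻¹ * (∑ i, x i a) * ∑ i, x i b := by
  rcases eq_or_ne N 0 with rfl | hN
  · simp [scatter]
  simp only [scatter, sampleMean, Matrix.sum_apply, vecMulVec_apply, Pi.sub_apply,
    Pi.smul_apply, Finset.sum_apply, smul_eq_mul, sub_mul, mul_sub, sum_sub_distrib, ← mul_sum,
    ← sum_mul, sum_const, card_univ, Fintype.card_fin, nsmul_eq_mul]
  field_simp
  ring

-- The sample with `x j` left out is encoded as `Fin.init (x ∘ σ)`, where `σ` moves `j` to the end.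
theorem sum_castSucc_comp_perm {M : Type*} [AddCommGroup M] (g : Fin (N + 1) → M)
    (hσ : σ (Fin.last N) = j) :
    ∑ i : Fin N, g (σ i.castSucc) = ∑ k, g k - g j := by
  have h := Fin.sum_univ_castSucc fun i => g (σ i)
  rw [Equiv.sum_comp σ g, hσ] at h
  exact eq_sub_of_add_eq h.symm

theorem sampleMean_init_comp_perm (x : Fin (N + 1) → n → ℝ) (hσ : σ (Fin.last N) = j) :
    sampleMean (Fin.init (x ∘ σ)) = (N : ℝ)⁻¹ • (∑ k, x k - x j) := by
  rw [sampleMean, ← sum_castSucc_comp_perm x hσ]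
  rfl

theorem sub_sampleMean_init_comp_perm (hN : N ≠ 0) (x : Fin (N + 1) → n → ℝ)
    (hσ : σ (Fin.last N) = j) :
    x j - sampleMean (Fin.init (x ∘ σ)) = (1 + (N : ℝ)⁻¹) • (x j - sampleMean x) := by
  rw [sampleMean_init_comp_perm x hσ]
  ext a
  simp only [sampleMean, Pi.sub_apply, Pi.smul_apply, smul_eq_mul, Finset.sum_apply]
  push_cast
  field_simp
  ring

theorem scatter_eq_scatter_init_comp_perm_add (hN : N ≠ 0) (x : Fin (N + 1) → n → ℝ)
    (hσ : σ (Fin.last N) = j) :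
    scatter x = scatter (Fin.init (x ∘ σ))
      + (1 + (N : ℝ)⁻¹) • vecMulVec (x j - sampleMean x) (x j - sampleMean x) := by
  ext a b
  simp only [Matrix.add_apply, Matrix.smul_apply, scatter_apply, vecMulVec_apply, Pi.sub_apply,
    sampleMean, Pi.smul_apply, smul_eq_mul, Finset.sum_apply, Fin.init, Function.comp_apply]
  have hab := sum_castSucc_comp_perm (fun k => x k a * x k b) hσ
  have ha := sum_castSucc_comp_perm (fun k => x k a) hσ
  have hb := sum_castSucc_comp_perm (fun k => x k b) hσ
  beta_reduce at hab ha hb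
  rw [hab, ha, hb]
  push_cast
  field_simp
  ring

theorem posSemidef_scatter [Fintype n] (x : Fin N → n → ℝ) : (scatter x).PosSemidef :=
  posSemidef_sum _ fun i _ => by simpa using posSemidef_vecMulVec_self_star (x i - sampleMean x)

theorem sampleCov_eq_zero_of_le_one (hN : N ≤ 1) (x : Fin N → n → ℝ) : sampleCov x = 0 := by
  interval_cases N <;> simp [sampleCov, scatter]

theorem measurable_mahalanobisSqLast [Fintype n] [DecidableEq n] :
    Measurable (mahalanobisSqLast : (Fin (N + 1) → n → ℝ) → ℝ) := by
  have hM : Continuous fun x : Fin (N + 1) → n → ℝ => sampleCov (Fin.init x) := by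
    unfold sampleCov scatter sampleMean Fin.init
    fun_prop
  have hz : Continuous fun x : Fin (N + 1) → n → ℝ => x (Fin.last N) - sampleMean (Fin.init x) := by
    unfold sampleMean Fin.init
    fun_prop
  have h : (mahalanobisSqLast : (Fin (N + 1) → n → ℝ) → ℝ) = fun x =>
      (sampleCov (Fin.init x)).det⁻¹ * ((x (Fin.last N) - sampleMean (Fin.init x)) ⬝ᵥ
        ((sampleCov (Fin.init x)).adjugate *ᵥ (x (Fin.last N) - sampleMean (Fin.init x)))) := by
    funext x
    rw [mahalanobisSqLast, Matrix.inv_def, Ring.inverse_eq_inv', smul_mulVec, dotProduct_smul,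
      smul_eq_mul]
  rw [h]
  exact hM.matrix_det.measurable.inv.mul
    (hz.dotProduct (hM.matrix_adjugate.matrix_mulVec hz)).measurable

theorem isUnit_scatter_of_isUnit_sampleCov [Fintype n] [DecidableEq n] (hN : N ≠ 1)
    {x : Fin N → n → ℝ} (hx : IsUnit (sampleCov x)) : IsUnit (scatter x) := by
  have hN1 : (N : ℝ) - 1 ≠ 0 := sub_ne_zero.mpr (by exact_mod_cast hN)
  have h : scatter x = ((N : ℝ) - 1) • sampleCov x := by
    rw [sampleCov, smul_smul, mul_inv_cancel₀ hN1, one_smul]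
  rw [h, isUnit_iff_isUnit_det, det_smul]
  exact ((isUnit_iff_ne_zero.mpr hN1).pow _).mul ((isUnit_iff_isUnit_det _).mp hx)

theorem mahalanobisSqLast_eq [Fintype n] [DecidableEq n] (x : Fin (N + 1) → n → ℝ) :
    mahalanobisSqLast x = ((N : ℝ) - 1) *
      ((x (Fin.last N) - sampleMean (Fin.init x)) ⬝ᵥ
        ((scatter (Fin.init x))⁻¹ *ᵥ (x (Fin.last N) - sampleMean (Fin.init x)))) := by
  rw [mahalanobisSqLast, sampleCov, inv_smul₀, inv_inv, smul_mulVec, dotProduct_smul,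
    smul_eq_mul]

end SampleStatistics

section Leverage

variable {n : Type*} [Fintype n] [DecidableEq n] {N : ℕ}

noncomputable def leverage {M : ℕ} (x : Fin M → n → ℝ) (j : Fin M) : ℝ :=
  (x j - sampleMean x) ⬝ᵥ ((scatter x)⁻¹ *ᵥ (x j - sampleMean x))

/-- Sherman–Morrison's `s / (1 + (1 + N⁻¹) s)`, rewritten in terms of the leave-one-out
Mahalanobis distance `q = (N - 1) (1 + N⁻¹)² s`. -/
noncomputable def leverageOfMahalanobisSq (N : ℕ) (q : ℝ) : ℝ :=
  (N : ℝ) ^ 2 * q / (((N : ℝ) + 1) * ((N : ℝ) ^ 2 - 1 + N * q))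

theorem leverage_nonneg {M : ℕ} (x : Fin M → n → ℝ) (j : Fin M) : 0 ≤ leverage x j := by
  simpa only [leverage, star_trivial] using (posSemidef_scatter x).inv.dotProduct_mulVec_nonneg _

theorem sum_leverage_eq_card {M : ℕ} (x : Fin M → n → ℝ) (hx : IsUnit (scatter x)) :
    ∑ j, leverage x j = Fintype.card n :=
  sum_dotProduct_inv_mulVec_eq_card _ ((isUnit_iff_isUnit_det _).mp hx)

theorem monotoneOn_leverageOfMahalanobisSq (hN : 2 ≤ N) :
    MonotoneOn (leverageOfMahalanobisSq N) (Set.Ici 0) := by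
  intro q hq r hr hqr
  rw [Set.mem_Ici] at hq hr
  have hN1 : (0 : ℝ) < (N : ℝ) ^ 2 - 1 := by
    have : (2 : ℝ) ≤ N := by exact_mod_cast hN
    nlinarith
  unfold leverageOfMahalanobisSq
  rw [div_le_div_iff₀ (by positivity) (by positivity)]
  have : 0 ≤ (N : ℝ) ^ 2 * ((N : ℝ) + 1) * (((N : ℝ) ^ 2 - 1) * (r - q)) := by
    have := sub_nonneg.mpr hqr
    positivity
  linarith

variable (x : Fin (N + 1) → n → ℝ) {σ : Equiv.Perm (Fin (N + 1))} {j : Fin (N + 1)}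

theorem mahalanobisSqLast_comp_perm (hN : N ≠ 0) (hσ : σ (Fin.last N) = j) :
    mahalanobisSqLast (x ∘ σ) = ((N : ℝ) - 1) * (1 + (N : ℝ)⁻¹) ^ 2 *
      ((x j - sampleMean x) ⬝ᵥ ((scatter (Fin.init (x ∘ σ)))⁻¹ *ᵥ (x j - sampleMean x))) := by
  have hlast : (x ∘ σ) (Fin.last N) = x j := congrArg x hσ
  rw [mahalanobisSqLast_eq, hlast, sub_sampleMean_init_comp_perm hN x hσ, mulVec_smul,
    dotProduct_smul, smul_dotProduct, smul_eq_mul, smul_eq_mul]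
  ring

theorem posDef_scatter_of_isUnit_scatter_init_comp_perm (hN : N ≠ 0)
    (hσ : σ (Fin.last N) = j) (hS : IsUnit (scatter (Fin.init (x ∘ σ)))) :
    (scatter x).PosDef := by
  rw [scatter_eq_scatter_init_comp_perm_add hN x hσ]
  exact ((posSemidef_scatter _).posDef_iff_isUnit.mpr hS).add_posSemidef
    ((posSemidef_vecMulVec_self_star _).smul (by positivity))

theorem leverage_eq_leverageOfMahalanobisSq (hN : 2 ≤ N) (hσ : σ (Fin.last N) = j)
    (hS : IsUnit (scatter (Fin.init (x ∘ σ)))) :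
    leverage x j = leverageOfMahalanobisSq N (mahalanobisSqLast (x ∘ σ)) := by
  have hN0 : N ≠ 0 := by omega
  have hN1 : (1 : ℝ) < N := by exact_mod_cast hN
  have hT := (posDef_scatter_of_isUnit_scatter_init_comp_perm x hN0 hσ hS).isUnit
  rw [scatter_eq_scatter_init_comp_perm_add hN0 x hσ, isUnit_iff_isUnit_det] at hT
  rw [mahalanobisSqLast_comp_perm x hN0 hσ]
  set q := (x j - sampleMean x) ⬝ᵥ ((scatter (Fin.init (x ∘ σ)))⁻¹ *ᵥ (x j - sampleMean x))
  have hq : 0 ≤ q := by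
    simpa only [star_trivial] using (posSemidef_scatter _).inv.dotProduct_mulVec_nonneg _
  have hlev : leverage x j = q / (1 + (1 + (N : ℝ)⁻¹) * q) := by
    rw [leverage, scatter_eq_scatter_init_comp_perm_add hN0 x hσ]
    exact dotProduct_inv_add_smul_vecMulVec_mulVec ((isUnit_iff_isUnit_det _).mp hS) hT
      (by positivity)
  have hden : (N : ℝ) ^ 2 - 1 + N * ((N - 1) * (1 + (N : ℝ)⁻¹) ^ 2 * q) =
      ((N : ℝ) ^ 2 - 1) * (1 + (1 + (N : ℝ)⁻¹) * q) := by
    field_simp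
    ring
  have hN2 : (0 : ℝ) < (N : ℝ) ^ 2 - 1 := by nlinarith
  rw [hlev, leverageOfMahalanobisSq, hden]
  field_simp
  ring

theorem leverageOfMahalanobisSq_le_leverage (hN : 2 ≤ N) (hσ : σ (Fin.last N) = j) {t : ℝ}
    (ht : 0 < t) (hQ : t ≤ mahalanobisSqLast (x ∘ σ)) :
    leverageOfMahalanobisSq N t ≤ leverage x j := by
  -- a singular covariance has inverse `0`, hence Mahalanobis distance `0 < t`
  have hS : IsUnit (scatter (Fin.init (x ∘ σ))) := by
    by_contra hS
    rw [isUnit_iff_isUnit_det] at hS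
    rw [mahalanobisSqLast_comp_perm x (by omega) hσ, nonsing_inv_apply_not_isUnit _ hS,
      zero_mulVec, dotProduct_zero, mul_zero] at hQ
    exact ht.not_ge hQ
  rw [leverage_eq_leverageOfMahalanobisSq x hN hσ hS]
  exact monotoneOn_leverageOfMahalanobisSq hN ht.le (ht.le.trans hQ) hQ

theorem card_filter_mul_le_card (hN : 2 ≤ N) (hx : IsUnit (sampleCov (Fin.init x))) {t : ℝ}
    (ht : 0 < t) :
    (#{j | t ≤ mahalanobisSqLast (x ∘ Equiv.swap j (Fin.last N))} : ℝ) *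
      leverageOfMahalanobisSq N t ≤ Fintype.card n := by
  have hT := posDef_scatter_of_isUnit_scatter_init_comp_perm x (σ := Equiv.refl _)
    (by omega) rfl (isUnit_scatter_of_isUnit_sampleCov (by omega) hx)
  calc _ = ∑ j ∈ {j | t ≤ mahalanobisSqLast (x ∘ Equiv.swap j (Fin.last N))},
        leverageOfMahalanobisSq N t := by
        rw [sum_const, nsmul_eq_mul]
    _ ≤ ∑ j ∈ {j | t ≤ mahalanobisSqLast (x ∘ Equiv.swap j (Fin.last N))}, leverage x j :=
        sum_le_sum fun j hj => leverageOfMahalanobisSq_le_leverage x hN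
          (Equiv.swap_apply_right j _) ht (mem_filter.mp hj).2
    _ ≤ ∑ j, leverage x j :=
        sum_le_sum_of_subset_of_nonneg (filter_subset _ _) fun j _ _ => leverage_nonneg x j
    _ = Fintype.card n := sum_leverage_eq_card x hT.isUnit

theorem card_filter_le_min (hN : 2 ≤ N) (hx : IsUnit (sampleCov (Fin.init x))) {lam : ℝ}
    (hlam : 0 < lam) :
    (#{j | lam ^ 2 ≤ mahalanobisSqLast (x ∘ Equiv.swap j (Fin.last N))} : ℝ) ≤
      ((N : ℝ) + 1) * min 1
        (Fintype.card n * ((N : ℝ) ^ 2 - 1 + N * lam ^ 2) / ((N : ℝ) ^ 2 * lam ^ 2)) := by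
  have hN1 : (0 : ℝ) < (N : ℝ) ^ 2 - 1 := by
    have : (2 : ℝ) ≤ N := by exact_mod_cast hN
    nlinarith
  rw [mul_min_of_nonneg _ _ (by positivity), mul_one]
  refine le_min ?_ ?_
  · exact_mod_cast (card_le_univ _).trans_eq (Fintype.card_fin _)
  · have h := card_filter_mul_le_card x hN hx (pow_pos hlam 2)
    rw [← le_div_iff₀ (by unfold leverageOfMahalanobisSq; positivity)] at h
    refine h.trans_eq ?_
    unfold leverageOfMahalanobisSq
    field_simp

end Leverage

theorem measure_le_ofReal_of_card_filter_le {α β ι : Type*} [MeasurableSpace α]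
    [MeasurableSpace β] [Fintype ι] [Nonempty ι] {μ : Measure α} [IsProbabilityMeasure μ]
    {ν : Measure β} {Y : ι → α → β} (hY : ∀ i, AEMeasurable (Y i) μ)
    (hlaw : ∀ i, μ.map (Y i) = ν) {G : Set β} (hG : MeasurableSet G) [DecidablePred (· ∈ G)]
    {b : ℝ} (hcount : ∀ᵐ a ∂μ, (#{i | Y i a ∈ G} : ℝ) ≤ Fintype.card ι * b) :
    ν G ≤ ENNReal.ofReal b := by
  have hind : ∀ i, AEMeasurable (fun a => G.indicator (1 : β → ℝ≥0∞) (Y i a)) μ := fun i =>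
    (measurable_one.indicator hG).comp_aemeasurable (hY i)
  have hsum : ∀ a, ∑ i, G.indicator (1 : β → ℝ≥0∞) (Y i a) = #{i | Y i a ∈ G} := fun a => by
    simp only [Set.indicator_apply, Pi.one_apply, sum_boole]
  have key : (Fintype.card ι : ℝ≥0∞) * ν G ≤ Fintype.card ι * ENNReal.ofReal b :=
    calc (Fintype.card ι : ℝ≥0∞) * ν G = ∑ i : ι, ∫⁻ a, G.indicator 1 (Y i a) ∂μ := by
          simp_rw [← lintegral_map' (measurable_one.indicator hG).aemeasurable (hY _), hlaw,
            lintegral_indicator_one hG, sum_const, card_univ, nsmul_eq_mul]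
      _ = ∫⁻ a, (#{i | Y i a ∈ G} : ℝ≥0∞) ∂μ := by
          rw [← lintegral_finsetSum' _ fun i _ => hind i]
          simp_rw [hsum]
      _ ≤ ∫⁻ _, ENNReal.ofReal (Fintype.card ι * b) ∂μ := by
          refine lintegral_mono_ae (hcount.mono fun a ha => ?_)
          rw [← ENNReal.ofReal_natCast]
          exact ENNReal.ofReal_le_ofReal ha
      _ = Fintype.card ι * ENNReal.ofReal b := by
          rw [lintegral_const, measure_univ, mul_one, ENNReal.ofReal_mul (by positivity),
            ENNReal.ofReal_natCast]
  exact (ENNReal.mul_le_mul_iff_right (by simp) (by simp)).mp key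

theorem ProbabilityTheory.iIndepFun.map_comp_perm_eq {Ω ι E : Type*} [MeasurableSpace Ω]
    [MeasurableSpace E] [Fintype ι] {μ : Measure Ω} {ξ : ι → Ω → E} (hindep : iIndepFun ξ μ)
    (hident : ∀ i j, IdentDistrib (ξ i) (ξ j) μ μ) (σ : Equiv.Perm ι) :
    μ.map (fun ω i => ξ (σ i) ω) = μ.map (fun ω i => ξ i ω) := by
  have hae : ∀ i, AEMeasurable (ξ i) μ := fun i => (hident i i).aemeasurable_fst
  rw [(hindep.precomp σ.injective).map_fun_eq_pi_map fun i => hae (σ i),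
    hindep.map_fun_eq_pi_map hae]
  congr 1
  funext i
  exact (hident (σ i) i).map_eq

theorem empirical_multivariate_chebyshev_simplified_general {Ω : Type*} [MeasureSpace Ω]
    [IsProbabilityMeasure (ℙ : Measure Ω)]
    (d N : ℕ) (hd : 1 ≤ d)
    (ξ : Fin (N + 1) → Ω → (Fin d → ℝ))
    (hindep : iIndepFun ξ ℙ)
    (hident : ∀ i j, IdentDistrib (ξ i) (ξ j) ℙ ℙ)
    (μN : Ω → (Fin d → ℝ))
    (hμN : ∀ ω, μN ω = (N : ℝ)⁻¹ • ∑ i : Fin N, ξ i.castSucc ω)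
    (SN : Ω → Matrix (Fin d) (Fin d) ℝ)
    (hSN : ∀ ω, SN ω = ((N : ℝ) - 1)⁻¹ •
      ∑ i : Fin N, vecMulVec (ξ i.castSucc ω - μN ω) (ξ i.castSucc ω - μN ω))
    (hns : ∀ᵐ ω ∂(ℙ : Measure Ω), IsUnit (SN ω))
    (lam : ℝ) (hlam : 0 < lam) :
    ℙ {ω | lam ^ 2 ≤
        (ξ (Fin.last N) ω - μN ω) ⬝ᵥ ((SN ω)⁻¹ *ᵥ (ξ (Fin.last N) ω - μN ω))}
      ≤ ENNReal.ofReal (min 1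
          ((d : ℝ) * ((N : ℝ) ^ 2 - 1 + (N : ℝ) * lam ^ 2)
            / ((N : ℝ) ^ 2 * lam ^ 2))) := by
  set X : Ω → Fin (N + 1) → Fin d → ℝ := fun ω i => ξ i ω
  have hSX : ∀ ω, SN ω = sampleCov (Fin.init (X ω)) := fun ω => by rw [hSN, hμN]; rfl
  have hQX : ∀ ω, (ξ (Fin.last N) ω - μN ω) ⬝ᵥ ((SN ω)⁻¹ *ᵥ (ξ (Fin.last N) ω - μN ω)) =
      mahalanobisSqLast (X ω) := fun ω => by rw [hSX, hμN]; rfl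
  have hN : 2 ≤ N := by
    by_contra h
    have : Nonempty (Fin d) := ⟨⟨0, hd⟩⟩
    obtain ⟨ω, hω⟩ := hns.exists
    rw [hSX, sampleCov_eq_zero_of_le_one (by omega)] at hω
    exact not_isUnit_zero hω
  have hae : ∀ σ : Equiv.Perm (Fin (N + 1)), AEMeasurable (fun ω i => ξ (σ i) ω) ℙ :=
    fun σ => aemeasurable_pi_lambda _ fun i => (hident (σ i) (σ i)).aemeasurable_fst
  have hG : MeasurableSet {y : Fin (N + 1) → Fin d → ℝ | lam ^ 2 ≤ mahalanobisSqLast y} :=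
    measurableSet_le measurable_const measurable_mahalanobisSqLast
  have hX : AEMeasurable X ℙ := hae (Equiv.refl _)
  simp_rw [hQX]
  change ℙ (X ⁻¹' {y | lam ^ 2 ≤ mahalanobisSqLast y}) ≤ _
  rw [← Measure.map_apply_of_aemeasurable hX hG]
  refine measure_le_ofReal_of_card_filter_le
    (Y := fun j ω i => ξ (Equiv.swap j (Fin.last N) i) ω) (fun j => hae _)
    (fun j => hindep.map_comp_perm_eq hident _) hG ?_
  filter_upwards [hns] with ω hω
  have hcount := card_filter_le_min (X ω) hN (hSX ω ▸ hω) hlam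
  rw [Fintype.card_fin] at hcount ⊢
  push_cast
  exact hcount

/-- **Remark after Theorem 1.** Empirical multivariate Chebyshev inequality: given `N+1`
i.i.d. random vectors in `ℝ^d` (with `N ≥ d ≥ 1`) whose unbiased empirical covariance `S_N` of
the first `N` samples is a.s. nonsingular, for every `λ > 0` the probability that
`(ξ_{N+1} − μ_N)ᵀ S_N⁻¹ (ξ_{N+1} − μ_N) ≥ λ²` is at most
`min{1, d(N²−1+Nλ²)/(N²λ²)}`. -/
theorem empirical_multivariate_chebyshev_simplified {Ω : Type*} [MeasureSpace Ω]
    [IsProbabilityMeasure (ℙ : Measure Ω)]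
    (d N : ℕ) (hd : 1 ≤ d) (hN : d ≤ N)
    (ξ : Fin (N + 1) → Ω → (Fin d → ℝ))
    (hmeas : ∀ i, Measurable (ξ i))
    (hindep : iIndepFun ξ ℙ)
    (hident : ∀ i j, IdentDistrib (ξ i) (ξ j) ℙ ℙ)
    (μN : Ω → (Fin d → ℝ))
    (hμN : ∀ ω, μN ω = (N : ℝ)⁻¹ • ∑ i : Fin N, ξ i.castSucc ω)
    (SN : Ω → Matrix (Fin d) (Fin d) ℝ)
    (hSN : ∀ ω, SN ω = ((N : ℝ) - 1)⁻¹ •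
      ∑ i : Fin N, vecMulVec (ξ i.castSucc ω - μN ω) (ξ i.castSucc ω - μN ω))
    (hns : ∀ᵐ ω ∂(ℙ : Measure Ω), IsUnit (SN ω))
    (lam : ℝ) (hlam : 0 < lam) :
    ℙ {ω | lam ^ 2 ≤
        (ξ (Fin.last N) ω - μN ω) ⬝ᵥ ((SN ω)⁻¹ *ᵥ (ξ (Fin.last N) ω - μN ω))}
      ≤ ENNReal.ofReal (min 1
          ((d : ℝ) * ((N : ℝ) ^ 2 - 1 + (N : ℝ) * lam ^ 2)
            / ((N : ℝ) ^ 2 * lam ^ 2))) :=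
  empirical_multivariate_chebyshev_simplified_general d N hd ξ hindep hident μN hμN SN hSN hns lam
    hlam
end

section
/- Let d ≥ 1 and N ≥ 1, let ξ_1, …, ξ_{N+1} be i.i.d. random vectors in ℝ^d, and let A ⊆ (ℝ^d)^{N+1} be a measurable set. Suppose there is an integer m ≥ 0 such that for every tuple (x_1, …, x_{N+1}) ∈ (ℝ^d)^{N+1}, the number of indices i ∈ {1, …, N+1} for which the tuple obtained by swapping x_i into the last position belongs to A is at most m. Then P((ξ_1, …, ξ_{N+1}) ∈ A) ≤ m/(N+1). -/
open MeasureTheory ProbabilityTheory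

/-!
The joint law of an i.i.d. family is the product of identical marginals, hence invariant under
permuting coordinates. So each of the `N + 1` events "the tuple with coordinate `i` swapped into
the last position lies in `A`" has the same probability as `A` itself. By hypothesis every outcome
lies in at most `m` of these events, so integrating the sum of their indicators gives
`(N + 1) · P(A) ≤ m`.
-/

lemma MeasureTheory.sum_measure_le_of_forall_ncard_le {α ι : Type*} [MeasurableSpace α]
    [Fintype ι] {μ : Measure α} {s : ι → Set α} (hs : ∀ i, NullMeasurableSet (s i) μ) {m : ℕ}
    (hm : ∀ x, {i | x ∈ s i}.ncard ≤ m) :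
    ∑ i, μ (s i) ≤ m * μ Set.univ := by
  classical
  have hsum_indicator : ∀ x, ∑ i, (s i).indicator 1 x = ({i | x ∈ s i}.ncard : ENNReal) :=
    fun x => by simp [Set.indicator_apply, Finset.sum_boole, Set.ncard_eq_toFinset_card']
  calc ∑ i, μ (s i) = ∫⁻ x, ∑ i, (s i).indicator 1 x ∂μ := by
        rw [lintegral_finsetSum' _ fun i _ =>
          (aemeasurable_one.indicator₀ (hs i) : AEMeasurable ((s i).indicator 1) μ)]
        simp_rw [lintegral_indicator_one₀ (hs _)]
    _ ≤ ∫⁻ _, (m : ENNReal) ∂μ := lintegral_mono fun x => by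
        rw [hsum_indicator]; exact Nat.cast_le.mpr (hm x)
    _ = m * μ Set.univ := lintegral_const _

lemma ProbabilityTheory.iIndepFun.map_fun_comp_perm_eq {Ω ι β : Type*} [Fintype ι]
    [MeasurableSpace Ω] [MeasurableSpace β] {μ : Measure Ω} [IsProbabilityMeasure μ] {ξ : ι → Ω → β}
    (hindep : iIndepFun ξ μ) (hident : ∀ i j, IdentDistrib (ξ i) (ξ j) μ μ)
    (σ : Equiv.Perm ι) :
    μ.map (fun ω i => ξ (σ i) ω) = μ.map (fun ω i => ξ i ω) := by
  have hae : ∀ i, AEMeasurable (ξ i) μ := fun i => (hident i i).aemeasurable_fst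
  rw [(iIndepFun_iff_map_fun_eq_pi_map fun i => hae (σ i)).1 (hindep.precomp σ.injective),
    (iIndepFun_iff_map_fun_eq_pi_map hae).1 hindep]
  exact congrArg Measure.pi (funext fun i => (hident _ _).map_eq)

theorem exchangeability_counting_bound_general {Ω : Type*} [MeasureSpace Ω]
    [IsProbabilityMeasure (ℙ : Measure Ω)]
    (d N : ℕ)
    (ξ : Fin (N + 1) → Ω → (Fin d → ℝ))
    (hindep : iIndepFun ξ ℙ)
    (hident : ∀ i j, IdentDistrib (ξ i) (ξ j) ℙ ℙ)
    (A : Set (Fin (N + 1) → (Fin d → ℝ))) (hA : MeasurableSet A)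
    (m : ℕ)
    (hcount : ∀ x : Fin (N + 1) → (Fin d → ℝ),
      Set.ncard {i : Fin (N + 1) | (x ∘ Equiv.swap i (Fin.last N)) ∈ A} ≤ m) :
    ℙ {ω | (fun i => ξ i ω) ∈ A} ≤ (m : ENNReal) / ((N : ENNReal) + 1) := by
  have hX : ∀ σ : Equiv.Perm (Fin (N + 1)), AEMeasurable (fun ω i => ξ (σ i) ω) ℙ :=
    fun σ => aemeasurable_pi_lambda _ fun i => (hident (σ i) i).aemeasurable_fst
  have hswap : ∀ σ : Equiv.Perm (Fin (N + 1)),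
      ℙ ((fun ω i => ξ (σ i) ω) ⁻¹' A) = ℙ ((fun ω i => ξ i ω) ⁻¹' A) := fun σ => by
    rw [← Measure.map_apply_of_aemeasurable (hX σ) hA, hindep.map_fun_comp_perm_eq hident σ]
    exact Measure.map_apply_of_aemeasurable (hX 1) hA
  have hsum := sum_measure_le_of_forall_ncard_le
    (fun i => (hX (Equiv.swap i (Fin.last N))).nullMeasurable hA) fun ω => hcount fun i => ξ i ω
  simp only [hswap, Finset.sum_const, Finset.card_univ, Fintype.card_fin, measure_univ, mul_one,
    nsmul_eq_mul] at hsum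
  rw [ENNReal.le_div_iff_mul_le (by simp) (by simp), mul_comm]
  exact_mod_cast hsum

/-- Exchangeability counting bound: if `ξ_1, …, ξ_{N+1}` are i.i.d. random
vectors in `ℝ^d` and `A` is a measurable set of tuples such that, for every tuple, at most `m`
of the `N+1` tuples obtained by swapping one coordinate into the last position belong to `A`,
then `P((ξ_1, …, ξ_{N+1}) ∈ A) ≤ m/(N+1)`. -/
theorem exchangeability_counting_bound {Ω : Type*} [MeasureSpace Ω]
    [IsProbabilityMeasure (ℙ : Measure Ω)]
    (d N : ℕ) (hd : 1 ≤ d) (hN : 1 ≤ N)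
    (ξ : Fin (N + 1) → Ω → (Fin d → ℝ))
    (hmeas : ∀ i, Measurable (ξ i))
    (hindep : iIndepFun ξ ℙ)
    (hident : ∀ i j, IdentDistrib (ξ i) (ξ j) ℙ ℙ)
    (A : Set (Fin (N + 1) → (Fin d → ℝ))) (hA : MeasurableSet A)
    (m : ℕ)
    (hcount : ∀ x : Fin (N + 1) → (Fin d → ℝ),
      Set.ncard {i : Fin (N + 1) | (x ∘ Equiv.swap i (Fin.last N)) ∈ A} ≤ m) :
    ℙ {ω | (fun i => ξ i ω) ∈ A} ≤ (m : ENNReal) / ((N : ENNReal) + 1) :=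
  exchangeability_counting_bound_general d N ξ hindep hident A hA m hcount
end

section
/- Let d ≥ 1 and N ≥ 2 be integers, let k > 0 be a real number with k² < N, let S be a d×d symmetric positive definite matrix, and let w ∈ ℝ^d. Set v := (N/(N+1))·w, M := ((N−1)/(N+1))·S + (1/N)·v vᵀ, and q_N := wᵀ S^{-1} w. Then vᵀ M^{-1} v ≥ k² if and only if q_N ≥ (N² − 1)k² / ( N(N − k²) ). -/
/-!
`M = c S + (1/N) v vᵀ` with `c = (N−1)/(N+1) > 0`, so `M` maps `S⁻¹ v` to `(c + t/N) v`, where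
`t = vᵀ S⁻¹ v`. This Sherman–Morrison step gives `vᵀ M⁻¹ v = t / (c + t/N)`, which for
`t = (N/(N+1))² q_N` equals `N² q_N / (N² − 1 + N q_N)`; the threshold condition is then a linear
inequality in `q_N`.
-/

open Matrix

namespace Matrix

theorem PosDef.smul_add_smul_vecMulVec {n : Type*} [Fintype n] {S : Matrix n n ℝ}
    (hS : S.PosDef) {c u : ℝ} (hc : 0 < c) (hu : 0 ≤ u) (v : n → ℝ) :
    (c • S + u • vecMulVec v v).PosDef :=
  (hS.smul hc).add_posSemidef ((posSemidef_vecMulVec_self_star v).smul hu)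

section Field

variable {n K : Type*} [Fintype n] [DecidableEq n] [Field K]

theorem smul_add_smul_vecMulVec_mulVec_inv_mulVec {S : Matrix n n K} (hS : IsUnit S.det)
    (c u : K) (v : n → K) :
    (c • S + u • vecMulVec v v) *ᵥ (S⁻¹ *ᵥ v) = (c + u * (v ⬝ᵥ (S⁻¹ *ᵥ v))) • v := by
  rw [add_mulVec, smul_mulVec, smul_mulVec, mulVec_mulVec, mul_nonsing_inv _ hS, one_mulVec,
    vecMulVec_mulVec, op_smul_eq_smul, smul_smul, add_smul]

theorem dotProduct_inv_smul_add_smul_vecMulVec_mulVec {S : Matrix n n K} (hS : IsUnit S.det)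
    {c u : K} {v : n → K} (hM : IsUnit (c • S + u • vecMulVec v v).det) :
    v ⬝ᵥ ((c • S + u • vecMulVec v v)⁻¹ *ᵥ v)
      = v ⬝ᵥ (S⁻¹ *ᵥ v) / (c + u * (v ⬝ᵥ (S⁻¹ *ᵥ v))) := by
  set M := c • S + u • vecMulVec v v
  set α := c + u * (v ⬝ᵥ (S⁻¹ *ᵥ v))
  have hx : S⁻¹ *ᵥ v = α • (M⁻¹ *ᵥ v) := by
    rw [← mulVec_smul, ← smul_add_smul_vecMulVec_mulVec_inv_mulVec hS, mulVec_mulVec,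
      nonsing_inv_mul _ hM, one_mulVec]
  rcases eq_or_ne α 0 with hα | hα
  · have hv : v = 0 := by
      rw [← one_mulVec v, ← mul_nonsing_inv _ hS, ← mulVec_mulVec, hx, hα, zero_smul,
        mulVec_zero]
    simp [hv]
  · rw [hx, dotProduct_smul, smul_eq_mul, mul_div_cancel_left₀ _ hα]

end Field

end Matrix

theorem threshold_le_iff {N k q : ℝ} (hN : 1 < N) (hk : k ^ 2 < N) (hq : 0 ≤ q) :
    k ^ 2 ≤ (N / (N + 1)) ^ 2 * q / ((N - 1) / (N + 1) + N⁻¹ * ((N / (N + 1)) ^ 2 * q))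
      ↔ (N ^ 2 - 1) * k ^ 2 / (N * (N - k ^ 2)) ≤ q := by
  have hN1 : N + 1 ≠ 0 := by positivity
  have hden : 0 < N ^ 2 - 1 + N * q := by nlinarith
  have hdenom : (N - 1) / (N + 1) + N⁻¹ * ((N / (N + 1)) ^ 2 * q)
      = (N ^ 2 - 1 + N * q) / (N + 1) ^ 2 := by
    field_simp
    ring
  have hratio : (N / (N + 1)) ^ 2 * q / ((N - 1) / (N + 1) + N⁻¹ * ((N / (N + 1)) ^ 2 * q))
      = N ^ 2 * q / (N ^ 2 - 1 + N * q) := by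
    rw [hdenom, div_div_eq_mul_div, div_pow, div_mul_eq_mul_div,
      div_mul_cancel₀ _ (pow_ne_zero 2 hN1)]
  rw [hratio, le_div_iff₀ hden, div_le_iff₀ (by nlinarith)]
  constructor <;> intro h <;> linarith

theorem normalized_event_equivalence_general (d N : ℕ) (hN : 2 ≤ N)
    (k : ℝ) (hk2 : k ^ 2 < N)
    (S : Matrix (Fin d) (Fin d) ℝ) (hS : S.PosDef) (w : Fin d → ℝ)
    (v : Fin d → ℝ) (hv : v = ((N : ℝ) / ((N : ℝ) + 1)) • w)
    (M : Matrix (Fin d) (Fin d) ℝ)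
    (hM : M = (((N : ℝ) - 1) / ((N : ℝ) + 1)) • S + (N : ℝ)⁻¹ • vecMulVec v v)
    (qN : ℝ) (hqN : qN = w ⬝ᵥ (S⁻¹ *ᵥ w)) :
    k ^ 2 ≤ v ⬝ᵥ (M⁻¹ *ᵥ v)
      ↔ ((N : ℝ) ^ 2 - 1) * k ^ 2 / ((N : ℝ) * ((N : ℝ) - k ^ 2)) ≤ qN := by
  have hN1 : (1 : ℝ) < N := by exact_mod_cast hN
  have hMpd : M.PosDef := hM ▸ hS.smul_add_smul_vecMulVec
    (div_pos (by linarith) (by linarith)) (by positivity) v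
  have hqN0 : 0 ≤ qN := hqN ▸ hS.inv.posSemidef.dotProduct_mulVec_nonneg w
  have ht : v ⬝ᵥ (S⁻¹ *ᵥ v) = ((N : ℝ) / (N + 1)) ^ 2 * qN := by
    rw [hv, hqN, mulVec_smul, dotProduct_smul, smul_dotProduct, smul_eq_mul, smul_eq_mul]
    ring
  have hSdet : IsUnit S.det := hS.det_pos.ne'.isUnit
  rw [hM, dotProduct_inv_smul_add_smul_vecMulVec_mulVec hSdet (hM ▸ hMpd.det_pos.ne'.isUnit),
    ht]
  exact threshold_le_iff hN1 hk2 hqN0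

/-- With `v := (N/(N+1))·w`, `M := ((N−1)/(N+1))·S + (1/N)·v vᵀ`
and `q_N := wᵀ S⁻¹ w`, for `0 < k` with `k² < N` one has
`vᵀ M⁻¹ v ≥ k²` iff `q_N ≥ (N²−1)k² / (N(N−k²))`. -/
theorem normalized_event_equivalence (d N : ℕ) (hd : 1 ≤ d) (hN : 2 ≤ N)
    (k : ℝ) (hk : 0 < k) (hk2 : k ^ 2 < N)
    (S : Matrix (Fin d) (Fin d) ℝ) (hS : S.PosDef) (w : Fin d → ℝ)
    (v : Fin d → ℝ) (hv : v = ((N : ℝ) / ((N : ℝ) + 1)) • w)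
    (M : Matrix (Fin d) (Fin d) ℝ)
    (hM : M = (((N : ℝ) - 1) / ((N : ℝ) + 1)) • S + (N : ℝ)⁻¹ • vecMulVec v v)
    (qN : ℝ) (hqN : qN = w ⬝ᵥ (S⁻¹ *ᵥ w)) :
    k ^ 2 ≤ v ⬝ᵥ (M⁻¹ *ᵥ v)
      ↔ ((N : ℝ) ^ 2 - 1) * k ^ 2 / ((N : ℝ) * ((N : ℝ) - k ^ 2)) ≤ qN :=
  normalized_event_equivalence_general d N hN k hk2 S hS w v hv M hM qN hqN
end
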